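/- arXiv:2310.02196 — 2 statements merged into one kernel-verified Lean document; each statement's English description precedes it below -/
import Mathlib

section
/- Let 𝔅 be a Boolean subalgebra of P(ω) and M a subset of the unit ball of M(𝔅) that lies inside a free subset K of the dual unit ball of JL(𝔅). Then for every B ∈ 𝔅 and ε > 0 there exists a simple 𝔅-measurable function g such that |⟨μ, g⟩ − |μ(B)|| < ε for every μ ∈ M. -/
/-! Freeness of `K` realises the continuous function `μ ↦ |μ (J B)|` on `K` as evaluation at some
`x ∈ X`. Since functionals in `K` have norm at most one, approximating `x` in norm by a simple
function `g` approximates `μ x = |μ (J B)|` by `μ g` uniformly in `μ ∈ K`. -/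

theorem WeakDual.exists_mem_forall_abs_apply_sub_lt_of_dense
    {X : Type*} [NormedAddCommGroup X] [NormedSpace ℝ X]
    {S : Set X} (hS : Dense S) (K : Set (WeakDual ℝ X))
    (hK : ∀ μ ∈ K, ∀ x : X, |μ x| ≤ ‖x‖) (x : X) {ε : ℝ} (hε : 0 < ε) :
    ∃ g ∈ S, ∀ μ ∈ K, |μ g - μ x| < ε := by
  obtain ⟨g, hg, hdist⟩ := Metric.mem_closure_iff.mp (hS x) ε hε
  refine ⟨g, hg, fun μ hμ => ?_⟩
  calc |μ g - μ x| = |μ (g - x)| := by rw [map_sub]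
    _ ≤ ‖g - x‖ := hK μ hμ _
    _ < ε := by rwa [← dist_eq_norm, dist_comm]

theorem approx_abs_on_free_set_general
    {X : Type*} [NormedAddCommGroup X] [NormedSpace ℝ X]
    (𝔅 : Set (Set ℕ)) (J : Set ℕ → X)
    (hdense : Dense (↑(Submodule.span ℝ (J '' 𝔅)) : Set X))
    (K : Set (WeakDual ℝ X))
    (hKball : ∀ μ ∈ K, ∀ x : X, |μ x| ≤ ‖x‖)
    (hfree : ∀ f : C(K, ℝ), ∃ x : X, ∀ μ : K, f μ = (μ : WeakDual ℝ X) x)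
    (M : Set (WeakDual ℝ X)) (hMK : M ⊆ K) :
    ∀ B ∈ 𝔅, ∀ ε > 0, ∃ g ∈ Submodule.span ℝ (J '' 𝔅),
      ∀ μ ∈ M, abs (μ g - abs (μ (J B))) < ε := by
  intro B _ ε hε
  have habs_cont : Continuous fun μ : K => |(μ : WeakDual ℝ X) (J B)| :=
    ((WeakDual.eval_continuous (J B)).comp continuous_subtype_val).abs
  obtain ⟨x, hx⟩ := hfree ⟨_, habs_cont⟩
  obtain ⟨g, hg, hgx⟩ :=
    WeakDual.exists_mem_forall_abs_apply_sub_lt_of_dense hdense K hKball x hε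
  refine ⟨g, hg, fun μ hμ => ?_⟩
  have hμx : |μ (J B)| = μ x := hx ⟨μ, hMK hμ⟩
  rw [hμx]
  exact hgx μ (hMK hμ)

/-- Let `𝔅` be a Boolean subalgebra of `P(ω)`, `X = JL(𝔅)` the closure
of the span of the indicator functions `J B` (`B ∈ 𝔅`), and `K ⊆ B_{X*}` a free
weak*-closed set. If `M ⊆ K`, then for every `B ∈ 𝔅` and `ε > 0` there is a simple
`𝔅`-measurable function `g` (an element of the span of the indicators) with
`|⟨μ, g⟩ − |μ(B)|| < ε` for all `μ ∈ M`. -/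
theorem approx_abs_on_free_set
    {X : Type*} [NormedAddCommGroup X] [NormedSpace ℝ X] [CompleteSpace X]
    (𝔅 : Set (Set ℕ)) (J : Set ℕ → X)
    (hdense : Dense (↑(Submodule.span ℝ (J '' 𝔅)) : Set X))
    (K : Set (WeakDual ℝ X)) (hKclosed : IsClosed K)
    (hKball : ∀ μ ∈ K, ∀ x : X, |μ x| ≤ ‖x‖)
    (hfree : ∀ f : C(K, ℝ), ∃ x : X, ∀ μ : K, f μ = (μ : WeakDual ℝ X) x)
    (M : Set (WeakDual ℝ X)) (hMK : M ⊆ K) :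
    ∀ B ∈ 𝔅, ∀ ε > 0, ∃ g ∈ Submodule.span ℝ (J '' 𝔅),
      ∀ μ ∈ M, abs (μ g - abs (μ (J B))) < ε :=
  approx_abs_on_free_set_general 𝔅 J hdense K hKball hfree M hMK
end

section
/- Let c > 0, 0 < δ < c/11, a ≥ c, and r ≥ 1/2 be real numbers. Suppose real numbers s_n (n in an index set J₁) satisfy: |2a − (2ra + s_n)| ≤ δ(4 + 3r) for n ∈ J₂ and |2a − (−2ra + s_n)| ≤ δ(4 + 3r) for n ∈ J₁∖J₂, where J₂ ⊆ J₁. Then for every n ∈ J₁∖J₂ and k ∈ J₂ one has s_n − s_k ≥ 2r(2a − 3δ) − 8δ ≥ 2a − 11δ > 0. -/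
/-! The values `s n` on `J₁ \ J₂` lie within `δ (4 + 3r)` of `2a + 2ra`, those on `J₂` within the
same distance of `2a - 2ra`, so any two of them are at least `4ra - 2δ(4 + 3r)` apart.
Since `r ≥ 1/2` and `3δ < 2a`, this gap dominates `2a - 11δ`, which is positive because
`11δ < c ≤ a`. -/

lemma le_sub_of_abs_sub_add_le {p q q' x y ε : ℝ}
    (hx : |p - (q + x)| ≤ ε) (hy : |p - (q' + y)| ≤ ε) :
    q' - q - 2 * ε ≤ x - y := by
  linarith [(abs_le.mp hx).2, (abs_le.mp hy).1]

lemma sub_le_two_mul_mul_sub {r u v : ℝ} (hr : 1 / 2 ≤ r) (hu : 0 ≤ u) :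
    u - v ≤ 2 * r * u - v := by
  nlinarith

theorem key_estimate_large_r_general {ι : Type*} (c δ a r : ℝ) (J₁ J₂ : Set ι) (s : ι → ℝ)
    (hc : 0 < c) (hδ : δ < c / 11) (ha : c ≤ a) (hr : 1 / 2 ≤ r)
    (h2 : ∀ n ∈ J₂, |2 * a - (2 * r * a + s n)| ≤ δ * (4 + 3 * r))
    (h1 : ∀ n ∈ J₁ \ J₂, |2 * a - (-(2 * r * a) + s n)| ≤ δ * (4 + 3 * r)) :
    ∀ n ∈ J₁ \ J₂, ∀ k ∈ J₂,
      2 * r * (2 * a - 3 * δ) - 8 * δ ≤ s n - s k ∧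
      2 * a - 11 * δ ≤ 2 * r * (2 * a - 3 * δ) - 8 * δ ∧
      0 < 2 * a - 11 * δ := by
  intro n hn k hk
  have hgap := le_sub_of_abs_sub_add_le (h1 n hn) (h2 k hk)
  have h11δ : 11 * δ < a := by linarith
  refine ⟨by linarith, ?_, by linarith⟩
  have hscale := sub_le_two_mul_mul_sub (v := 8 * δ) hr (by linarith : 0 ≤ 2 * a - 3 * δ)
  linarith

/-- Key quantitative estimate (case `r ≥ 1/2`). -/
theorem key_estimate_large_r {ι : Type*} (c δ a r : ℝ) (J₁ J₂ : Set ι) (s : ι → ℝ)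
    (hc : 0 < c) (hδ0 : 0 < δ) (hδ : δ < c / 11) (ha : c ≤ a) (hr : 1 / 2 ≤ r)
    (hsub : J₂ ⊆ J₁)
    (h2 : ∀ n ∈ J₂, |2 * a - (2 * r * a + s n)| ≤ δ * (4 + 3 * r))
    (h1 : ∀ n ∈ J₁ \ J₂, |2 * a - (-(2 * r * a) + s n)| ≤ δ * (4 + 3 * r)) :
    ∀ n ∈ J₁ \ J₂, ∀ k ∈ J₂,
      2 * r * (2 * a - 3 * δ) - 8 * δ ≤ s n - s k ∧
      2 * a - 11 * δ ≤ 2 * r * (2 * a - 3 * δ) - 8 * δ ∧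
      0 < 2 * a - 11 * δ :=
  key_estimate_large_r_general c δ a r J₁ J₂ s hc hδ ha hr h2 h1
end
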